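/- arXiv:2108.12668 — 5 statements merged into one kernel-verified Lean document; each statement's English description precedes it below -/
import Mathlib

section
/- For every n ≥ 1 and every function h on [0,1] that is n-times differentiable with h, h', ..., h^{(n-1)} absolutely continuous and h^{(j)}(0) = 0 for 0 ≤ j ≤ n−1, one has ∫₀¹ |h(x)/xⁿ|² dx ≤ (4ⁿ/((2n−1)!!)²) ∫₀¹ |h^{(n)}(x)|² dx. -/
/-!
Cauchy–Schwarz gives `g(x)² ≤ (x^r / r) ∫₀ˣ g'(t)² t^(1-r) dt` for `g(x) = ∫₀ˣ g'`; integrating this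
against `x^(-(2r+1))` and swapping the order of integration (Schur's test) yields
`∫ g² x^(-(2r+1)) ≤ r⁻² ∫ g'² x^(1-2r)`. For `r = k + 1/2` this is the weighted Hardy inequality
`∫ (g / x^(k+1))² ≤ 4 / (2k+1)² ∫ (g' / x^k)²`, and applying it to `h, h', …, h^(n-1)` multiplies
the constants to `4ⁿ / ((2n-1)‼)²`. Working with lower Lebesgue integrals means no integrability of
the weighted left-hand sides has to be known in advance.
-/

open MeasureTheory intervalIntegral

open Set
open scoped ENNReal Nat

theorem sq_lintegral_mul_le {α : Type*} [MeasurableSpace α] (μ : Measure α) {f g : α → ℝ≥0∞}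
    (hf : AEMeasurable f μ) (hg : AEMeasurable g μ) :
    (∫⁻ a, f a * g a ∂μ) ^ 2 ≤ (∫⁻ a, f a ^ 2 ∂μ) * ∫⁻ a, g a ^ 2 ∂μ := by
  have hCS := ENNReal.lintegral_mul_le_Lp_mul_Lq μ Real.HolderConjugate.two_two hf hg
  simp only [Pi.mul_apply, ENNReal.rpow_two] at hCS
  calc (∫⁻ a, f a * g a ∂μ) ^ 2
      ≤ ((∫⁻ a, f a ^ 2 ∂μ) ^ (1 / 2 : ℝ) * (∫⁻ a, g a ^ 2 ∂μ) ^ (1 / 2 : ℝ)) ^ 2 :=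
        pow_le_pow_left₀ zero_le hCS 2
    _ = (∫⁻ a, f a ^ 2 ∂μ) * ∫⁻ a, g a ^ 2 ∂μ := by
        rw [mul_pow, ← ENNReal.rpow_natCast, ← ENNReal.rpow_mul, ← ENNReal.rpow_natCast,
          ← ENNReal.rpow_mul]
        norm_num

theorem lintegral_Ioc_zero_rpow {a x : ℝ} (ha : -1 < a) (hx : 0 ≤ x) :
    ∫⁻ t in Ioc 0 x, ENNReal.ofReal (t ^ a) = ENNReal.ofReal (x ^ (a + 1) / (a + 1)) := by
  rw [← ofReal_integral_eq_lintegral_ofReal (intervalIntegrable_rpow' ha).1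
    ((ae_restrict_iff' measurableSet_Ioc).2 (ae_of_all _ fun t ht => Real.rpow_nonneg ht.1.le _)),
    ← intervalIntegral.integral_of_le hx, integral_rpow (Or.inl ha),
    Real.zero_rpow (by linarith), sub_zero]

theorem lintegral_Ioi_rpow {a c : ℝ} (ha : a < -1) (hc : 0 < c) :
    ∫⁻ t in Ioi c, ENNReal.ofReal (t ^ a) = ENNReal.ofReal (-c ^ (a + 1) / (a + 1)) := by
  rw [← ofReal_integral_eq_lintegral_ofReal (integrableOn_Ioi_rpow_of_lt ha hc)
    ((ae_restrict_iff' measurableSet_Ioi).2 (ae_of_all _ fun t ht =>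
      Real.rpow_nonneg (hc.trans ht).le _)), integral_Ioi_rpow_of_lt ha hc]

theorem lintegral_lintegral_Ioc_swap {ψ c : ℝ → ℝ≥0∞} (hψ : Measurable ψ) (hc : Measurable c)
    (a b : ℝ) :
    ∫⁻ x in Ioc a b, (∫⁻ t in Ioc a x, ψ t) * c x
      = ∫⁻ t in Ioc a b, ψ t * ∫⁻ x in Icc t b, c x := by
  set F : ℝ × ℝ → ℝ≥0∞ := {p | p.2 ≤ p.1}.indicator fun p => ψ p.2 * c p.1
  have hF : Measurable F := ((hψ.comp measurable_snd).mul (hc.comp measurable_fst)).indicator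
    (measurableSet_le measurable_snd measurable_fst)
  calc ∫⁻ x in Ioc a b, (∫⁻ t in Ioc a x, ψ t) * c x
      = ∫⁻ x in Ioc a b, ∫⁻ t in Ioc a b, F (x, t) := by
        refine setLIntegral_congr_fun measurableSet_Ioc fun x hx => ?_
        have hFx : ∀ t, F (x, t) = (Iic x).indicator (fun t => ψ t * c x) t := fun _ => rfl
        simp_rw [hFx]
        rw [← lintegral_mul_const _ hψ, lintegral_indicator measurableSet_Iic,
          Measure.restrict_restrict measurableSet_Iic, Iic_inter_Ioc_of_le hx.2]
    _ = ∫⁻ t in Ioc a b, ∫⁻ x in Ioc a b, F (x, t) :=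
        lintegral_lintegral_swap hF.aemeasurable
    _ = ∫⁻ t in Ioc a b, ψ t * ∫⁻ x in Icc t b, c x := by
        refine setLIntegral_congr_fun measurableSet_Ioc fun t ht => ?_
        have hFt : ∀ x, F (x, t) = (Ici t).indicator (fun x => ψ t * c x) x := fun _ => rfl
        have hIcc : Ici t ∩ Ioc a b = Icc t b := by
          ext x
          simp only [mem_inter_iff, mem_Ici, mem_Ioc, mem_Icc]
          constructor
          · rintro ⟨htx, -, hxb⟩
            exact ⟨htx, hxb⟩
          · rintro ⟨htx, hxb⟩
            exact ⟨htx, ht.1.trans_le htx, hxb⟩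
        simp_rw [hFt]
        rw [lintegral_indicator measurableSet_Ici, Measure.restrict_restrict measurableSet_Ici,
          hIcc, lintegral_const_mul _ hc]

theorem ofReal_sq_integral_le_mul_lintegral {g' : ℝ → ℝ} (hg' : Measurable g') {r x : ℝ}
    (hr : 0 < r) (hx : 0 < x) :
    ENNReal.ofReal ((∫ t in 0..x, g' t) ^ 2)
      ≤ ENNReal.ofReal (x ^ r / r) * ∫⁻ t in Ioc 0 x, ENNReal.ofReal (g' t ^ 2 * t ^ (1 - r)) := by
  set f : ℝ → ℝ≥0∞ := fun t => ENNReal.ofReal (|g' t| * t ^ ((1 - r) / 2))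
  set w : ℝ → ℝ≥0∞ := fun t => ENNReal.ofReal (t ^ ((r - 1) / 2))
  have hfw : ∀ t ∈ Ioc 0 x, ‖g' t‖ₑ = f t * w t := fun t ht => by
    rw [← ENNReal.ofReal_mul (mul_nonneg (abs_nonneg _) (Real.rpow_nonneg ht.1.le _)), mul_assoc,
      ← Real.rpow_add ht.1, Real.enorm_eq_ofReal_abs]
    ring_nf
    rw [Real.rpow_zero, mul_one]
  have hf : ∀ t ∈ Ioc 0 x, f t ^ 2 = ENNReal.ofReal (g' t ^ 2 * t ^ (1 - r)) := fun t ht => by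
    rw [← ENNReal.ofReal_pow (mul_nonneg (abs_nonneg _) (Real.rpow_nonneg ht.1.le _)), mul_pow,
      sq_abs, ← Real.rpow_mul_natCast ht.1.le]
    ring_nf
  have hw : ∀ t ∈ Ioc 0 x, w t ^ 2 = ENNReal.ofReal (t ^ (r - 1)) := fun t ht => by
    rw [← ENNReal.ofReal_pow (Real.rpow_nonneg ht.1.le _), ← Real.rpow_mul_natCast ht.1.le]
    ring_nf
  have hnorm : ENNReal.ofReal |∫ t in 0..x, g' t| ≤ ∫⁻ t in Ioc 0 x, f t * w t := by
    rw [← Real.enorm_eq_ofReal_abs, intervalIntegral.integral_of_le hx.le,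
      ← setLIntegral_congr_fun measurableSet_Ioc hfw]
    exact enorm_integral_le_lintegral_enorm _
  calc ENNReal.ofReal ((∫ t in 0..x, g' t) ^ 2)
      = ENNReal.ofReal |∫ t in 0..x, g' t| ^ 2 := by
        rw [← ENNReal.ofReal_pow (abs_nonneg _), sq_abs]
    _ ≤ (∫⁻ t in Ioc 0 x, f t * w t) ^ 2 := pow_le_pow_left₀ zero_le hnorm 2
    _ ≤ (∫⁻ t in Ioc 0 x, f t ^ 2) * ∫⁻ t in Ioc 0 x, w t ^ 2 :=
        sq_lintegral_mul_le _ (by fun_prop) (by fun_prop)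
    _ = ENNReal.ofReal (x ^ r / r) * ∫⁻ t in Ioc 0 x, ENNReal.ofReal (g' t ^ 2 * t ^ (1 - r)) := by
        rw [setLIntegral_congr_fun measurableSet_Ioc hf,
          setLIntegral_congr_fun measurableSet_Ioc hw,
          lintegral_Ioc_zero_rpow (by linarith) hx.le, sub_add_cancel, mul_comm]

theorem lintegral_sq_mul_rpow_le {g g' : ℝ → ℝ} (hg' : Measurable g') {r b : ℝ} (hr : 0 < r)
    (hg : ∀ x ∈ Ioc 0 b, g x = ∫ t in 0..x, g' t) :
    ∫⁻ x in Ioc 0 b, ENNReal.ofReal (g x ^ 2 * x ^ (-(2 * r + 1)))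
      ≤ ENNReal.ofReal (1 / r ^ 2) *
          ∫⁻ t in Ioc 0 b, ENNReal.ofReal (g' t ^ 2 * t ^ (1 - 2 * r)) := by
  set ψ : ℝ → ℝ≥0∞ := fun t => ENNReal.ofReal (g' t ^ 2 * t ^ (1 - r))
  set c : ℝ → ℝ≥0∞ := fun x => ENNReal.ofReal (x ^ (-(r + 1)))
  have hψ : Measurable ψ := by fun_prop
  have hc : Measurable c := by fun_prop
  have pointwise : ∀ x ∈ Ioc 0 b, ENNReal.ofReal (g x ^ 2 * x ^ (-(2 * r + 1)))
      ≤ ENNReal.ofReal (1 / r) * ((∫⁻ t in Ioc 0 x, ψ t) * c x) := fun x hx => by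
    have hx0 := hx.1
    calc ENNReal.ofReal (g x ^ 2 * x ^ (-(2 * r + 1)))
        = ENNReal.ofReal (g x ^ 2) * ENNReal.ofReal (x ^ (-(2 * r + 1))) :=
          ENNReal.ofReal_mul (sq_nonneg _)
      _ ≤ ENNReal.ofReal (x ^ r / r) * (∫⁻ t in Ioc 0 x, ψ t) *
            ENNReal.ofReal (x ^ (-(2 * r + 1))) := by
          gcongr
          rw [hg x hx]
          exact ofReal_sq_integral_le_mul_lintegral hg' hr hx0
      _ = ENNReal.ofReal (1 / r) * ((∫⁻ t in Ioc 0 x, ψ t) * c x) := by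
          rw [mul_comm (ENNReal.ofReal _), mul_assoc, ← ENNReal.ofReal_mul (by positivity),
            mul_left_comm, ← ENNReal.ofReal_mul (by positivity)]
          congr 2
          rw [div_mul_eq_mul_div, ← Real.rpow_add hx0]
          ring_nf
  have tail : ∀ t ∈ Ioc 0 b, ∫⁻ x in Icc t b, c x ≤ ENNReal.ofReal (t ^ (-r) / r) := fun t ht => by
    calc ∫⁻ x in Icc t b, c x ≤ ∫⁻ x in Ici t, c x := lintegral_mono_set Icc_subset_Ici_self
      _ = ∫⁻ x in Ioi t, c x := setLIntegral_congr Ioi_ae_eq_Ici.symm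
      _ = ENNReal.ofReal (t ^ (-r) / r) := by
          rw [lintegral_Ioi_rpow (by linarith) ht.1]
          ring_nf
  calc ∫⁻ x in Ioc 0 b, ENNReal.ofReal (g x ^ 2 * x ^ (-(2 * r + 1)))
      ≤ ∫⁻ x in Ioc 0 b, ENNReal.ofReal (1 / r) * ((∫⁻ t in Ioc 0 x, ψ t) * c x) :=
        setLIntegral_mono' measurableSet_Ioc pointwise
    _ = ENNReal.ofReal (1 / r) * ∫⁻ t in Ioc 0 b, ψ t * ∫⁻ x in Icc t b, c x := by
        rw [lintegral_const_mul' _ _ ENNReal.ofReal_ne_top, lintegral_lintegral_Ioc_swap hψ hc]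
    _ ≤ ENNReal.ofReal (1 / r) * ∫⁻ t in Ioc 0 b, ψ t * ENNReal.ofReal (t ^ (-r) / r) := by
        exact mul_le_mul' le_rfl
          (setLIntegral_mono' measurableSet_Ioc fun t ht => mul_le_mul' le_rfl (tail t ht))
    _ = ENNReal.ofReal (1 / r ^ 2) *
          ∫⁻ t in Ioc 0 b, ENNReal.ofReal (g' t ^ 2 * t ^ (1 - 2 * r)) := by
        rw [← lintegral_const_mul' _ _ ENNReal.ofReal_ne_top,
          ← lintegral_const_mul' _ _ ENNReal.ofReal_ne_top]
        refine setLIntegral_congr_fun measurableSet_Ioc fun t ht => ?_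
        have ht0 := ht.1
        rw [← ENNReal.ofReal_mul (by positivity), ← ENNReal.ofReal_mul (by positivity),
          ← ENNReal.ofReal_mul (by positivity)]
        congr 1
        rw [show 1 - 2 * r = (1 - r) + -r by ring, Real.rpow_add ht0]
        field_simp

theorem sq_div_pow_eq_mul_rpow {x : ℝ} (hx : 0 ≤ x) (y : ℝ) (m : ℕ) :
    (y / x ^ m) ^ 2 = y ^ 2 * x ^ (-(2 * m : ℝ)) := by
  rw [div_pow, ← pow_mul, Real.rpow_neg hx,
    show (2 * m : ℝ) = ((m * 2 : ℕ) : ℝ) by push_cast; ring, Real.rpow_natCast, div_eq_mul_inv]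

theorem lintegral_sq_div_pow_succ_le {g g' : ℝ → ℝ} (hg' : Measurable g') (k : ℕ) {b : ℝ}
    (hg : ∀ x ∈ Ioc 0 b, g x = ∫ t in 0..x, g' t) :
    ∫⁻ x in Ioc 0 b, ENNReal.ofReal ((g x / x ^ (k + 1)) ^ 2)
      ≤ ENNReal.ofReal (4 / (2 * k + 1) ^ 2) *
          ∫⁻ x in Ioc 0 b, ENNReal.ofReal ((g' x / x ^ k) ^ 2) := by
  have hr : (0 : ℝ) < k + 1 / 2 := by positivity
  have hweight : ∀ (y : ℝ → ℝ) (m : ℕ) (e : ℝ), e = -(2 * m : ℝ) →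
      ∫⁻ x in Ioc 0 b, ENNReal.ofReal ((y x / x ^ m) ^ 2)
        = ∫⁻ x in Ioc 0 b, ENNReal.ofReal (y x ^ 2 * x ^ e) := fun y m e he => by
    refine setLIntegral_congr_fun measurableSet_Ioc fun x hx => ?_
    rw [sq_div_pow_eq_mul_rpow hx.1.le, he]
  calc ∫⁻ x in Ioc 0 b, ENNReal.ofReal ((g x / x ^ (k + 1)) ^ 2)
      = ∫⁻ x in Ioc 0 b, ENNReal.ofReal (g x ^ 2 * x ^ (-(2 * (k + 1 / 2 : ℝ) + 1))) :=
        hweight g (k + 1) _ (by push_cast; ring)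
    _ ≤ ENNReal.ofReal (1 / (k + 1 / 2 : ℝ) ^ 2) *
          ∫⁻ x in Ioc 0 b, ENNReal.ofReal (g' x ^ 2 * x ^ (1 - 2 * (k + 1 / 2 : ℝ))) :=
        lintegral_sq_mul_rpow_le hg' hr hg
    _ = ENNReal.ofReal (4 / (2 * k + 1) ^ 2) *
          ∫⁻ x in Ioc 0 b, ENNReal.ofReal ((g' x / x ^ k) ^ 2) := by
        rw [hweight g' k (1 - 2 * (k + 1 / 2 : ℝ)) (by ring)]
        congr 2
        field_simp
        ring

theorem Nat.doubleFactorial_two_mul_succ_sub_one (k : ℕ) :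
    (2 * (k + 1) - 1)‼ = (2 * k + 1) * (2 * k - 1)‼ := by
  rw [show 2 * (k + 1) - 1 = 2 * k + 1 by omega, Nat.doubleFactorial_add_one]

theorem lintegral_sq_div_pow_le_iteratedDeriv (k : ℕ) {f : ℝ → ℝ} {b : ℝ}
    (hf : ∀ j < k, ∀ x ∈ Ioc 0 b, iteratedDeriv j f x = ∫ t in 0..x, iteratedDeriv (j + 1) f t) :
    ∫⁻ x in Ioc 0 b, ENNReal.ofReal ((f x / x ^ k) ^ 2)
      ≤ ENNReal.ofReal (4 ^ k / ((2 * k - 1)‼ : ℝ) ^ 2) *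
        ∫⁻ x in Ioc 0 b, ENNReal.ofReal (iteratedDeriv k f x ^ 2) := by
  induction k generalizing f with
  | zero => simp
  | succ k ih =>
    have hf' : ∀ j < k, ∀ x ∈ Ioc 0 b,
        iteratedDeriv j (deriv f) x = ∫ t in 0..x, iteratedDeriv (j + 1) (deriv f) t :=
      fun j hj x hx => by simpa only [← iteratedDeriv_succ'] using hf (j + 1) (by omega) x hx
    have hf0 : ∀ x ∈ Ioc 0 b, f x = ∫ t in 0..x, deriv f t :=
      fun x hx => by simpa using hf 0 (by omega) x hx
    calc ∫⁻ x in Ioc 0 b, ENNReal.ofReal ((f x / x ^ (k + 1)) ^ 2)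
        ≤ ENNReal.ofReal (4 / (2 * k + 1) ^ 2) *
            ∫⁻ x in Ioc 0 b, ENNReal.ofReal ((deriv f x / x ^ k) ^ 2) :=
          lintegral_sq_div_pow_succ_le (measurable_deriv f) k hf0
      _ ≤ ENNReal.ofReal (4 / (2 * k + 1) ^ 2) *
            (ENNReal.ofReal (4 ^ k / ((2 * k - 1)‼ : ℝ) ^ 2) *
              ∫⁻ x in Ioc 0 b, ENNReal.ofReal (iteratedDeriv k (deriv f) x ^ 2)) :=
          mul_le_mul' le_rfl (ih hf')
      _ = ENNReal.ofReal (4 ^ (k + 1) / ((2 * (k + 1) - 1)‼ : ℝ) ^ 2) *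
            ∫⁻ x in Ioc 0 b, ENNReal.ofReal (iteratedDeriv (k + 1) f x ^ 2) := by
          rw [← mul_assoc, ← ENNReal.ofReal_mul (by positivity), iteratedDeriv_succ',
            Nat.doubleFactorial_two_mul_succ_sub_one]
          congr 2
          push_cast
          field_simp
          ring

theorem integral_le_mul_integral_of_lintegral_le {α : Type*} [MeasurableSpace α] {μ : Measure α}
    {f g : α → ℝ} {C : ℝ} (hC : 0 ≤ C) (hf : 0 ≤ᵐ[μ] f) (hg : Integrable g μ) (hg0 : 0 ≤ᵐ[μ] g)
    (h : ∫⁻ a, ENNReal.ofReal (f a) ∂μ ≤ ENNReal.ofReal C * ∫⁻ a, ENNReal.ofReal (g a) ∂μ) :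
    ∫ a, f a ∂μ ≤ C * ∫ a, g a ∂μ := by
  have hRHS : 0 ≤ C * ∫ a, g a ∂μ := mul_nonneg hC (integral_nonneg_of_ae hg0)
  by_cases hfi : Integrable f μ
  · rwa [← ENNReal.ofReal_le_ofReal_iff hRHS, ENNReal.ofReal_mul hC,
      ofReal_integral_eq_lintegral_ofReal hfi hf, ofReal_integral_eq_lintegral_ofReal hg hg0]
  · rwa [integral_undef hfi]

theorem stmt2_general (n : ℕ) (h : ℝ → ℝ)
    (hAC : ∀ j < n, ∀ x ∈ Set.Icc (0:ℝ) 1,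
      iteratedDeriv j h x = ∫ t in (0:ℝ)..x, iteratedDeriv (j+1) h t)
    (hint : IntegrableOn (fun x => (iteratedDeriv n h x)^2) (Set.Icc (0:ℝ) 1)) :
    ∫ x in (0:ℝ)..1, (h x / x ^ n)^2
      ≤ (4 ^ n / ((Nat.doubleFactorial (2*n - 1) : ℝ))^2) *
        ∫ x in (0:ℝ)..1, (iteratedDeriv n h x)^2 := by
  rw [intervalIntegral.integral_of_le zero_le_one, intervalIntegral.integral_of_le zero_le_one]
  exact integral_le_mul_integral_of_lintegral_le (by positivity) (ae_of_all _ fun _ => sq_nonneg _)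
    (hint.mono_set Ioc_subset_Icc_self) (ae_of_all _ fun _ => sq_nonneg _)
    (lintegral_sq_div_pow_le_iteratedDeriv n fun j hj x hx => hAC j hj x (Ioc_subset_Icc_self hx))

/-- Higher-order Hardy inequality on `[0,1]`: if `h, h', …, h^{(n-1)}` are absolutely
continuous on `[0,1]` (encoded by the fundamental-theorem-of-calculus representation)
and vanish at `0`, then `∫₀¹ |h(x)/xⁿ|² dx ≤ (4ⁿ/((2n−1)‼)²) ∫₀¹ |h^{(n)}(x)|² dx`. -/
theorem stmt2 (n : ℕ) (hn : 1 ≤ n) (h : ℝ → ℝ)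
    (hAC : ∀ j < n, ∀ x ∈ Set.Icc (0:ℝ) 1,
      iteratedDeriv j h x = ∫ t in (0:ℝ)..x, iteratedDeriv (j+1) h t)
    (h0 : ∀ j < n, iteratedDeriv j h 0 = 0)
    (hint : IntegrableOn (fun x => (iteratedDeriv n h x)^2) (Set.Icc (0:ℝ) 1)) :
    ∫ x in (0:ℝ)..1, (h x / x ^ n)^2
      ≤ (4 ^ n / ((Nat.doubleFactorial (2*n - 1) : ℝ))^2) *
        ∫ x in (0:ℝ)..1, (iteratedDeriv n h x)^2 :=
  stmt2_general n h hAC hint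
end

section
/- Let 0 < τ ≤ ∞ and let t ↦ T_t be strictly positive, nonincreasing and continuous on [0,τ), with T_t → 0 as t → τ if τ < ∞. Then there exists a strictly increasing sequence (t_n)_{n≥0} in ℝ with t₀ = −T₀/2, t₁ = 0, t_{n+1} − t_n = T_{t_{n+1}}/2 for all n ≥ 0, all t_n ∈ [0,τ) for n ≥ 1, and t_n → τ as n → ∞. -/
open Filter Topology

/-- Construction of the partition sequence: for `0 < τ ≤ ∞` and `T` strictly positive,
nonincreasing and continuous on `[0,τ)`, with `T_t → 0` as `t → τ` if `τ < ∞`,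
there is a strictly increasing sequence `t_n` with `t₀ = −T₀/2`, `t₁ = 0`,
`t_{n+1} − t_n = T_{t_{n+1}}/2`, `t_n ∈ [0,τ)` for `n ≥ 1`, and `t_n → τ`. -/
theorem stmt5 (τ : EReal) (hτ : 0 < τ) (T : ℝ → ℝ)
    (hpos : ∀ t : ℝ, 0 ≤ t → (t : EReal) < τ → 0 < T t)
    (hanti : ∀ s t : ℝ, 0 ≤ s → s ≤ t → (t : EReal) < τ → T t ≤ T s)
    (hcont : ContinuousOn T {t : ℝ | 0 ≤ t ∧ (t : EReal) < τ})
    (hlim : ∀ τ' : ℝ, τ = (τ' : EReal) →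
      Tendsto T (nhdsWithin τ' (Set.Iio τ')) (nhds 0)) :
    ∃ t : ℕ → ℝ, StrictMono t ∧ t 0 = -(T 0)/2 ∧ t 1 = 0 ∧
      (∀ n : ℕ, t (n+1) - t n = T (t (n+1)) / 2) ∧
      (∀ n : ℕ, 1 ≤ n → 0 ≤ t n ∧ (t n : EReal) < τ) ∧
      Tendsto (fun n => (t n : EReal)) atTop (nhds τ) := by
  have h0τ : ((0 : ℝ) : EReal) < τ := by simpa using hτ
  -- Step lemma: from any admissible point `s` we can find the next point `u`.
  have hstep : ∀ s : ℝ, 0 ≤ s → (s : EReal) < τ →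
      ∃ u : ℝ, s < u ∧ (u : EReal) < τ ∧ u - s = T u / 2 := by
    intro s hs hsτ
    have hTs : 0 < T s := hpos s hs hsτ
    obtain ⟨b, hsb, hbτ, hb⟩ : ∃ b : ℝ, s ≤ b ∧ (b : EReal) < τ ∧ 0 ≤ b - s - T b / 2 := by
      by_cases hcase : ((s + T s / 2 : ℝ) : EReal) < τ
      · refine ⟨s + T s / 2, by linarith, hcase, ?_⟩
        have := hanti s (s + T s / 2) hs (by linarith) hcase
        linarith
      · -- τ is a finite real here
        have hnt : τ ≠ ⊤ := by
          intro h; rw [h] at hcase; exact hcase (EReal.coe_lt_top _)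
        have hnb : τ ≠ ⊥ := by
          intro h; rw [h] at hτ; exact absurd hτ (by simp)
        obtain ⟨τ', rfl⟩ : ∃ τ' : ℝ, τ = (τ' : EReal) :=
          ⟨τ.toReal, (EReal.coe_toReal hnt hnb).symm⟩
        have hsτ' : s < τ' := EReal.coe_lt_coe_iff.mp hsτ
        have h1 : ∀ᶠ x in 𝓝[<] τ', T x < τ' - s :=
          (hlim τ' rfl).eventually_lt_const (by linarith)
        have h2 : ∀ᶠ x in 𝓝[<] τ', (s + τ') / 2 < x :=
          eventually_nhdsWithin_of_eventually_nhds (eventually_gt_nhds (by linarith))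
        have h3 : ∀ᶠ x in 𝓝[<] τ', x < τ' :=
          eventually_mem_nhdsWithin.mono (fun x hx => hx)
        obtain ⟨x, hx1, hx2, hx3⟩ := (h1.and (h2.and h3)).exists
        refine ⟨x, by linarith, EReal.coe_lt_coe_iff.mpr hx3, by linarith [hx2]⟩
      -- IVT on g t = t - s - T t / 2
    have hsub : Set.Icc s b ⊆ {t : ℝ | 0 ≤ t ∧ (t : EReal) < τ} := by
      intro x hx
      exact ⟨hs.trans hx.1, lt_of_le_of_lt (EReal.coe_le_coe_iff.mpr hx.2) hbτ⟩
    have hgc : ContinuousOn (fun t => t - s - T t / 2) (Set.Icc s b) :=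
      (continuousOn_id.sub continuousOn_const).sub ((hcont.mono hsub).div_const 2)
    have hmem : (0 : ℝ) ∈ Set.Icc (s - s - T s / 2) (b - s - T b / 2) := by
      constructor <;> [linarith; linarith]
    obtain ⟨u, hu, hgu⟩ := intermediate_value_Icc hsb hgc hmem
    have huτ : (u : EReal) < τ := lt_of_le_of_lt (EReal.coe_le_coe_iff.mpr hu.2) hbτ
    have hTu : 0 < T u := hpos u (hs.trans hu.1) huτ
    have hdiff : u - s = T u / 2 := by dsimp at hgu; linarith
    exact ⟨u, by linarith, huτ, hdiff⟩
  choose g hg1 hg2 hg3 using hstep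
  -- build the sequence
  let v : ℕ → {x : ℝ // 0 ≤ x ∧ (x : EReal) < τ} := fun n =>
    Nat.rec ⟨0, le_refl 0, h0τ⟩
      (fun _ p => ⟨g p.1 p.2.1 p.2.2, p.2.1.trans (hg1 p.1 p.2.1 p.2.2).le,
        hg2 p.1 p.2.1 p.2.2⟩) n
  let t : ℕ → ℝ := fun n => Nat.rec (-(T 0)/2) (fun m _ => (v m).1) n
  have hT0 : 0 < T 0 := hpos 0 le_rfl h0τ
  have ht0 : t 0 = -(T 0)/2 := rfl
  have ht1 : t 1 = 0 := rfl
  have hvsucc : ∀ n, (v (n+1)).1 = g (v n).1 (v n).2.1 (v n).2.2 := fun n => rfl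
  have hlt : ∀ n, t n < t (n+1) := by
    intro n
    cases n with
    | zero => show -(T 0)/2 < 0; linarith
    | succ m =>
      show (v m).1 < (v (m+1)).1
      rw [hvsucc]
      exact hg1 _ _ _
  have hmono : StrictMono t := strictMono_nat_of_lt_succ hlt
  have hdiff : ∀ n : ℕ, t (n+1) - t n = T (t (n+1)) / 2 := by
    intro n
    cases n with
    | zero => show (0:ℝ) - (-(T 0)/2) = T 0 / 2; ring
    | succ m =>
      show (v (m+1)).1 - (v m).1 = T ((v (m+1)).1) / 2
      rw [hvsucc]
      exact hg3 _ _ _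
  have hmem : ∀ n : ℕ, 1 ≤ n → 0 ≤ t n ∧ Real.toEReal (t n) < τ := by
    intro n hn
    cases n with
    | zero => omega
    | succ m => exact (v m).2
  -- all terms are below τ
  have hallτ : ∀ n, Real.toEReal (t n) < τ := by
    intro n
    cases n with
    | zero => exact lt_of_le_of_lt (EReal.coe_le_coe_iff.mpr (hlt 0).le) (hmem 1 le_rfl).2
    | succ m => exact (hmem (m+1) (Nat.succ_le_succ (Nat.zero_le m))).2
  -- key claim: the sequence exceeds every a < τ
  have claim : ∀ a : EReal, a < τ → ∃ n, a < Real.toEReal (t n) := by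
    intro a haτ
    by_contra hcon
    push_neg at hcon
    have hane_top : a ≠ ⊤ := fun h => absurd (h ▸ haτ) (by simp)
    have hane_bot : a ≠ ⊥ := by
      intro h
      have := hcon 1
      rw [ht1, h] at this
      simp at this
    obtain ⟨L, rfl⟩ : ∃ L : ℝ, a = (L : EReal) := ⟨a.toReal, (EReal.coe_toReal hane_top hane_bot).symm⟩
    have hble : ∀ n, t n ≤ L := fun n => EReal.coe_le_coe_iff.mp (hcon n)
    have hbdd : BddAbove (Set.range t) := ⟨L, by rintro x ⟨n, rfl⟩; exact hble n⟩
    set M := ⨆ n, t n with hM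
    have htend : Tendsto t atTop (𝓝 M) := tendsto_atTop_ciSup hmono.monotone hbdd
    have hleM : ∀ n, t n ≤ M := fun n => le_ciSup hbdd n
    have hML : M ≤ L := ciSup_le hble
    have hMτ : (M : EReal) < τ := lt_of_le_of_lt (EReal.coe_le_coe_iff.mpr hML) haτ
    have hM0 : 0 ≤ M := ht1 ▸ hleM 1
    have hTM : 0 < T M := hpos M hM0 hMτ
    have hdtend : Tendsto (fun n => t (n+1) - t n) atTop (𝓝 (M - M)) :=
      ((htend.comp (tendsto_add_atTop_nat 1)).sub htend)
    rw [sub_self] at hdtend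
    have hge : ∀ n, T M / 2 ≤ t (n+1) - t n := by
      intro n
      rw [hdiff n]
      have h1 : 0 ≤ t (n+1) := (hmem (n+1) (Nat.succ_le_succ (Nat.zero_le n))).1
      have := hanti (t (n+1)) M h1 (hleM (n+1)) hMτ
      linarith
    have := ge_of_tendsto' hdtend hge
    linarith
  refine ⟨t, hmono, ht0, ht1, hdiff, hmem, ?_⟩
  rw [tendsto_order]
  constructor
  · intro a haτ
    obtain ⟨n, hn⟩ := claim a haτ
    filter_upwards [eventually_ge_atTop n] with m hm
    exact lt_of_lt_of_le hn (EReal.coe_le_coe_iff.mpr (hmono.monotone hm))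
  · intro b hbτ
    filter_upwards with n
    exact lt_trans (hallτ n) hbτ
end

section
/- Let s_n be defined by s₁ = 0 and s_{n+1} − s_n = μ e^{−s_{n+1}} for a constant μ > 0 (each s_{n+1} being the unique solution of this implicit equation exceeding s_n). Then s_n < log(μn + e^{−μ}) for all n ≥ 1. -/
/-!
The map `g t = t - μ e^{-t}` is strictly increasing and the recursion reads `g (s (n + 1)) = s n`.
The comparison sequence `S n = log (μ n + e^{-μ})` satisfies `S n < g (S (n + 1))`, which is
`log x < x - 1` at `x = (μ n + e^{-μ}) / (μ (n + 1) + e^{-μ})`, and `s 1 = 0 < S 1`. Since `g` is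
strictly increasing, `g (s (n + 1)) = s n < S n < g (S (n + 1))` propagates `s < S`.
-/

open Real

theorem lt_of_map_succ_le_of_lt_map_succ {α : Type*} [LinearOrder α] {g : α → α}
    (hg : StrictMono g) {s S : ℕ → α} {k : ℕ} (hk : s k < S k)
    (hs : ∀ n, k ≤ n → g (s (n + 1)) ≤ s n) (hS : ∀ n, k ≤ n → S n < g (S (n + 1))) :
    ∀ n, k ≤ n → s n < S n := by
  intro n hn
  induction n, hn using Nat.le_induction with
  | base => exact hk
  | succ n hn ih => exact hg.lt_iff_lt.mp ((hs n hn).trans_lt (ih.trans (hS n hn)))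

theorem strictMono_sub_mul_exp_neg {μ : ℝ} (hμ : 0 ≤ μ) :
    StrictMono fun t : ℝ => t - μ * exp (-t) := by
  refine strictMono_id.add_monotone fun x y hxy => ?_
  simp only [neg_le_neg_iff]
  gcongr

theorem mul_exp_neg_log_add_lt_log_add_sub_log {a μ : ℝ} (ha : 0 < a) (hμ : 0 < μ) :
    μ * exp (-log (a + μ)) < log (a + μ) - log a := by
  have hb : 0 < a + μ := by linarith
  have hlt : log (a / (a + μ)) < a / (a + μ) - 1 :=
    log_lt_sub_one_of_pos (div_pos ha hb) (by rw [ne_eq, div_eq_one_iff_eq hb.ne']; linarith)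
  rw [log_div ha.ne' hb.ne'] at hlt
  have hfrac : a / (a + μ) - 1 = -(μ / (a + μ)) := by field_simp; ring
  rw [exp_neg, exp_log hb, ← div_eq_mul_inv]
  linarith

/-- Upper bound for the implicit sequence `s₁ = 0`, `s_{n+1} − s_n = μe^{−s_{n+1}}`:
`s_n < log(μn + e^{−μ})` for all `n ≥ 1`. -/
theorem stmt12 (μ : ℝ) (hμ : 0 < μ) (s : ℕ → ℝ)
    (hs1 : s 1 = 0)
    (hrec : ∀ n : ℕ, 1 ≤ n → s (n+1) - s n = μ * Real.exp (-(s (n+1)))) :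
    ∀ n : ℕ, 1 ≤ n → s n < Real.log (μ * n + Real.exp (-μ)) := by
  refine lt_of_map_succ_le_of_lt_map_succ (strictMono_sub_mul_exp_neg hμ.le) ?_
    (fun n hn => by linarith [hrec n hn]) (fun n _ => ?_)
  · have : 1 < μ + exp (-μ) := by linarith [add_one_lt_exp (neg_ne_zero.mpr hμ.ne')]
    simpa [hs1] using log_pos this
  · have key := mul_exp_neg_log_add_lt_log_add_sub_log (a := μ * n + exp (-μ)) (by positivity) hμ
    have hsucc : μ * ↑(n + 1) + exp (-μ) = μ * n + exp (-μ) + μ := by push_cast; ring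
    simp only [hsucc]
    linarith
end

section
/- For the sequence s_n with s₁ = 0 and s_{n+1} − s_n = μ e^{−s_{n+1}} (μ > 0), one has the lower bound s_n > ψ(n + 1 + μ^{−1}e^{−μ}) − ψ(2 + μ^{−1}e^{−μ}) for all n ≥ 2, where ψ is the digamma function; consequently s_n = log(μn) + O(1) as n → ∞. -/
/-- The digamma function `ψ = Γ'/Γ`, as the derivative of `log ∘ Γ`. -/
noncomputable def digamma (x : ℝ) : ℝ :=
  deriv (fun y => Real.log (Real.Gamma y)) x

/-!
Summing the recursion gives `s_n = μ ∑_{r=2}^n e^{-s_r}`. Writing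
`d = s_{n+1} - s_n = μe^{-s_{n+1}}`, we get `e^{s_{n+1}} - e^{s_n} = e^{s_{n+1}}(1 - e^{-d}) <
e^{s_{n+1}} d = μ`, so `e^{s_r} < μr + e^{-μ}` and every term of the sum exceeds
`1/(r + μ⁻¹e^{-μ})`. These partial fractions telescope against `ψ(x+1) = ψ(x) + 1/x` into the
digamma difference, and against `log(x+1) - log x ≤ 1/x` into a logarithm, which together with the
upper bound `s_n < log(μn + e^{-μ})` pins `s_n` to `log(μn)` up to a constant.
-/

open Real Finset Filter

lemma digamma_add_one {x : ℝ} (hx : 0 < x) : digamma (x + 1) = digamma x + 1 / x := by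
  have hdiff : ∀ {y : ℝ}, 0 < y → DifferentiableAt ℝ (fun z => log (Gamma z)) y := fun hy =>
    (differentiableAt_Gamma fun m => by linarith [(m.cast_nonneg : (0 : ℝ) ≤ m)]).log
      (Gamma_pos_of_pos hy).ne'
  unfold digamma
  rw [← deriv_comp_add_const (fun z => log (Gamma z)) 1 x, one_div, ← deriv_log,
    ← deriv_add (hdiff hx) (differentiableAt_log hx.ne')]
  apply EventuallyEq.deriv_eq
  filter_upwards [eventually_gt_nhds hx] with y hy
  simp only [Gamma_add_one hy.ne', log_mul hy.ne' (Gamma_pos_of_pos hy).ne', add_comm]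
  rfl

lemma sum_Icc_one_div_add_eq_digamma_sub {c : ℝ} (hc : -2 < c) {n : ℕ} (hn : 1 ≤ n) :
    ∑ r ∈ Icc 2 n, 1 / ((r : ℝ) + c) = digamma (n + 1 + c) - digamma (2 + c) := by
  induction n, hn using Nat.le_induction with
  | base => norm_num
  | succ n hn ih =>
    have hpos : (0 : ℝ) < n + 1 + c := by
      linarith [(Nat.one_le_cast.mpr hn : (1 : ℝ) ≤ n)]
    rw [sum_Icc_succ_top (by omega), ih]
    push_cast
    rw [show (n : ℝ) + 1 + 1 + c = n + 1 + c + 1 by ring, digamma_add_one hpos]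
    ring

lemma log_add_one_sub_log_le {x : ℝ} (hx : 0 < x) : log (x + 1) - log x ≤ 1 / x := by
  rw [← log_div (by positivity) hx.ne']
  calc log ((x + 1) / x) ≤ (x + 1) / x - 1 := log_le_sub_one_of_pos (by positivity)
    _ = 1 / x := by field_simp; ring

lemma log_sub_log_le_sum_Icc_one_div_add {c : ℝ} (hc : -2 < c) {n : ℕ} (hn : 1 ≤ n) :
    log (n + 1 + c) - log (2 + c) ≤ ∑ r ∈ Icc 2 n, 1 / ((r : ℝ) + c) := by
  induction n, hn using Nat.le_induction with
  | base => norm_num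
  | succ n hn ih =>
    have hpos : (0 : ℝ) < n + 1 + c := by
      linarith [(Nat.one_le_cast.mpr hn : (1 : ℝ) ≤ n)]
    have hstep := log_add_one_sub_log_le hpos
    rw [sum_Icc_succ_top (by omega)]
    push_cast
    rw [show (n : ℝ) + 1 + 1 + c = n + 1 + c + 1 by ring]
    linarith

section Recursion

variable {μ : ℝ} {s : ℕ → ℝ}
  (hrec : ∀ n : ℕ, 1 ≤ n → s (n + 1) - s n = μ * exp (-s (n + 1)))
include hrec

lemma exp_succ_lt_exp_add (hμ : 0 < μ) {n : ℕ} (hn : 1 ≤ n) :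
    exp (s (n + 1)) < exp (s n) + μ := by
  set d := s (n + 1) - s n
  have hd : d = μ * exp (-s (n + 1)) := hrec n hn
  have hd0 : d ≠ 0 := by rw [hd]; positivity
  have hexp_mul : exp (s (n + 1)) * d = μ := by
    rw [hd, mul_left_comm, ← exp_add, add_neg_cancel, exp_zero, mul_one]
  have hexp : exp (s n) = exp (s (n + 1)) * exp (-d) := by
    rw [← exp_add]; congr 1; ring
  have hconvex : -d + 1 < exp (-d) := add_one_lt_exp (neg_ne_zero.mpr hd0)
  nlinarith [exp_pos (s (n + 1))]

lemma exp_lt_mul_add_exp_neg (hμ : 0 < μ) (hs1 : s 1 = 0) {n : ℕ} (hn : 1 ≤ n) :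
    exp (s n) < μ * n + exp (-μ) := by
  induction n, hn using Nat.le_induction with
  | base =>
    have := add_one_lt_exp (neg_ne_zero.mpr hμ.ne')
    rw [hs1, exp_zero, Nat.cast_one]
    linarith
  | succ n hn ih =>
    have := exp_succ_lt_exp_add hrec hμ hn
    push_cast
    linarith

lemma eq_mul_sum_Icc_exp_neg (hs1 : s 1 = 0) {n : ℕ} (hn : 1 ≤ n) :
    s n = μ * ∑ r ∈ Icc 2 n, exp (-s r) := by
  induction n, hn using Nat.le_induction with
  | base => simp [hs1]
  | succ n hn ih =>
    rw [sum_Icc_succ_top (by omega), mul_add, ← ih]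
    linarith [hrec n hn]

lemma one_div_add_lt_mul_exp_neg (hμ : 0 < μ) (hs1 : s 1 = 0) {r : ℕ} (hr : 1 ≤ r) :
    1 / (r + exp (-μ) / μ) < μ * exp (-s r) := by
  rw [← mul_div_cancel_left₀ (r : ℝ) hμ.ne', ← add_div, one_div_div, exp_neg (s r),
    ← div_eq_mul_inv]
  exact div_lt_div_of_pos_left hμ (exp_pos _) (exp_lt_mul_add_exp_neg hrec hμ hs1 hr)

lemma sum_Icc_one_div_add_lt (hμ : 0 < μ) (hs1 : s 1 = 0) {n : ℕ} (hn : 2 ≤ n) :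
    ∑ r ∈ Icc 2 n, 1 / ((r : ℝ) + exp (-μ) / μ) < s n := by
  rw [eq_mul_sum_Icc_exp_neg hrec hs1 (by omega), mul_sum]
  exact sum_lt_sum_of_nonempty (nonempty_Icc.mpr hn) fun r hr =>
    one_div_add_lt_mul_exp_neg hrec hμ hs1 (by linarith [(mem_Icc.mp hr).1])

lemma abs_sub_log_mul_le (hμ : 0 < μ) (hs1 : s 1 = 0) {n : ℕ} (hn : 1 ≤ n) :
    |s n - log (μ * n)| ≤ log (1 + exp (-μ) / μ) + |log μ| + log (2 + exp (-μ) / μ) := by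
  set c := exp (-μ) / μ
  have hc : 0 < c := by positivity
  have hn1 : (1 : ℝ) ≤ n := Nat.one_le_cast.mpr hn
  have hμn : 0 < μ * n := by positivity
  have hupper : s n < log (μ * n) + log (1 + c) := by
    rw [← log_mul hμn.ne' (by positivity), lt_log_iff_exp_lt (by positivity)]
    calc exp (s n) < μ * n + μ * c := by
          rw [mul_div_cancel₀ _ hμ.ne']; exact exp_lt_mul_add_exp_neg hrec hμ hs1 hn
      _ ≤ μ * n * (1 + c) := by nlinarith [mul_pos hμ hc]
  have hlog2c : 0 ≤ log (2 + c) := log_nonneg (by linarith)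
  have hlower : log n - log (2 + c) ≤ s n := by
    have hlog : log n ≤ log (n + 1 + c) := log_le_log (by positivity) (by linarith)
    rcases hn.eq_or_lt with rfl | hn2
    · simpa [hs1] using hlog2c
    · linarith [log_sub_log_le_sum_Icc_one_div_add (by linarith : -2 < c) hn,
        sum_Icc_one_div_add_lt hrec hμ hs1 hn2]
  rw [log_mul hμ.ne' (by positivity)] at hupper ⊢
  have : 0 ≤ log (1 + c) := log_nonneg (by linarith)
  rw [abs_le]
  constructor <;> linarith [le_abs_self (log μ), neg_abs_le (log μ)]

end Recursion

/-- Lower bound for the implicit sequence `s₁ = 0`, `s_{n+1} − s_n = μe^{−s_{n+1}}`: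
`s_n > ψ(n+1+μ⁻¹e^{−μ}) − ψ(2+μ⁻¹e^{−μ})` for `n ≥ 2`; consequently
`s_n = log(μn) + O(1)` as `n → ∞`. -/
theorem stmt13 (μ : ℝ) (hμ : 0 < μ) (s : ℕ → ℝ)
    (hs1 : s 1 = 0)
    (hrec : ∀ n : ℕ, 1 ≤ n → s (n+1) - s n = μ * Real.exp (-(s (n+1)))) :
    (∀ n : ℕ, 2 ≤ n →
      s n > digamma (n + 1 + Real.exp (-μ) / μ) - digamma (2 + Real.exp (-μ) / μ)) ∧
    ∃ C : ℝ, ∀ n : ℕ, 1 ≤ n → |s n - Real.log (μ * n)| ≤ C := by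
  have hc : -2 < exp (-μ) / μ := by linarith [show 0 < exp (-μ) / μ by positivity]
  refine ⟨fun n hn => ?_, _, fun n hn => abs_sub_log_mul_le hrec hμ hs1 hn⟩
  rw [← sum_Icc_one_div_add_eq_digamma_sub hc (by omega)]
  exact sum_Icc_one_div_add_lt hrec hμ hs1 hn
end

section
/- For m ∈ ℕ let I(m,m;x) be the regularized incomplete beta function with equal parameters. Then ∫₀¹ I(m,m;x)² dx = 1/2 − (2m)!⁴/(4·(4m)!·m!⁴) and ∫₀¹ (d/dx I(m,m;x))² dx = ((2m−2)!² (2m−1)!²)/((4m−3)! (m−1)!⁴). -/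
/-!
With `G(x) = ∫₀ˣ (t(1-t))ⁿ dt` we have `I(n+1,n+1;x) = G(x)/G(1)`. Integrating `G²` by parts
against `x - 1/2` gives `∫₀¹ G² = G(1)²/2 + ∫₀¹ (1-2x)(x(1-x))ⁿ G`. Since `(1-2x)(x(1-x))ⁿ` is the
derivative of `(x(1-x))ⁿ⁺¹/(n+1)`, which vanishes at `0` and `1`, a second integration by parts
turns the last integral into `-B(2n+2,2n+2)/(n+1)`. The derivative of `I` is `(x(1-x))ⁿ/G(1)`, so
the second integral is `B(2n+1,2n+1)/G(1)²` directly.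
-/

/-- The real Beta function `B(a,b) = ∫₀¹ t^{a−1}(1−t)^{b−1} dt`. -/
noncomputable def realBeta (a b : ℝ) : ℝ :=
  ∫ t in (0:ℝ)..1, t ^ (a - 1) * (1 - t) ^ (b - 1)

/-- The regularised incomplete Beta function `I(a,b;x)`. -/
noncomputable def regIncBeta (a b x : ℝ) : ℝ :=
  (∫ t in (0:ℝ)..x, t ^ (a - 1) * (1 - t) ^ (b - 1)) / realBeta a b

open intervalIntegral
open scoped Nat

theorem integral_pow_mul_one_sub_pow (a b : ℕ) :
    ∫ x in (0:ℝ)..1, x ^ a * (1 - x) ^ b = (a ! * b ! / (a + b + 1)! : ℝ) := by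
  have h := Complex.betaIntegral_eq_Gamma_mul_div (a + 1) (b + 1)
    (by simp only [Complex.add_re, Complex.natCast_re, Complex.one_re]; positivity)
    (by simp only [Complex.add_re, Complex.natCast_re, Complex.one_re]; positivity)
  rw [show (a + 1 + (b + 1) : ℂ) = (a + b + 1 : ℕ) + 1 by push_cast; ring] at h
  simp only [Complex.betaIntegral, add_sub_cancel_right, Complex.cpow_natCast,
    Complex.Gamma_nat_eq_factorial] at h
  apply Complex.ofReal_injective
  rw [← integral_ofReal]
  push_cast
  exact h

theorem integral_mul_one_sub_pow (n : ℕ) :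
    ∫ x in (0:ℝ)..1, (x * (1 - x)) ^ n = (n ! ^ 2 / (2 * n + 1)! : ℝ) := by
  simp_rw [mul_pow, integral_pow_mul_one_sub_pow, two_mul, sq]

/-- `incBeta n x` is the unnormalised incomplete Beta function `B(x; n+1, n+1)`. -/
noncomputable def incBeta (n : ℕ) (x : ℝ) : ℝ := ∫ t in (0:ℝ)..x, (t * (1 - t)) ^ n

namespace incBeta

variable (n : ℕ)

theorem hasDerivAt (x : ℝ) : HasDerivAt (incBeta n) ((x * (1 - x)) ^ n) x :=
  (Continuous.integral_hasStrictDerivAt (by fun_prop) 0 x).hasDerivAt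

@[fun_prop]
theorem continuous : Continuous (incBeta n) :=
  continuous_iff_continuousAt.mpr fun x => (hasDerivAt n x).continuousAt

theorem apply_zero : incBeta n 0 = 0 := integral_same

theorem apply_one : incBeta n 1 = (n ! ^ 2 / (2 * n + 1)! : ℝ) :=
  integral_mul_one_sub_pow n

end incBeta

theorem integral_sq_eq_of_hasDerivAt {G g : ℝ → ℝ} (hG : ∀ x, HasDerivAt G (g x) x)
    (hg : Continuous g) (hG0 : G 0 = 0) :
    ∫ x in (0:ℝ)..1, G x ^ 2 = G 1 ^ 2 / 2 + ∫ x in (0:ℝ)..1, (1 - 2 * x) * g x * G x := by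
  have hGc : Continuous G := continuous_iff_continuousAt.mpr fun x => (hG x).continuousAt
  have hparts := integral_deriv_mul_eq_sub (a := 0) (b := 1)
    (u := fun x => x - 1 / 2) (u' := fun _ => 1) (v := fun x => G x ^ 2)
    (v' := fun x => 2 * G x * g x)
    (fun x _ => (hasDerivAt_id x).sub_const _)
    (fun x _ => by simpa using (hG x).fun_pow 2)
    (Continuous.intervalIntegrable (by fun_prop) _ _)
    (Continuous.intervalIntegrable (by fun_prop) _ _)
  rw [integral_add (Continuous.intervalIntegrable (by fun_prop) _ _)
    (Continuous.intervalIntegrable (by fun_prop) _ _)] at hparts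
  have hflip : ∫ x in (0:ℝ)..1, (x - 1 / 2) * (2 * G x * g x)
      = -∫ x in (0:ℝ)..1, (1 - 2 * x) * g x * G x := by
    rw [← integral_neg]; congr 1; ext x; ring
  simp only [one_mul, hflip, hG0] at hparts
  linarith

theorem hasDerivAt_mul_one_sub_pow_succ (n : ℕ) (x : ℝ) :
    HasDerivAt (fun x => (x * (1 - x)) ^ (n + 1))
      ((n + 1) * (x * (1 - x)) ^ n * (1 - 2 * x)) x := by
  refine (((hasDerivAt_id' x).fun_mul ((hasDerivAt_id' x).const_sub 1)).fun_pow (n + 1))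
    |>.congr_deriv ?_
  push_cast [add_tsub_cancel_right]
  ring

theorem integral_one_sub_two_mul_mul_pow_mul_of_hasDerivAt {G : ℝ → ℝ} (n : ℕ)
    (hG : ∀ x, HasDerivAt G ((x * (1 - x)) ^ n) x) :
    (n + 1) * ∫ x in (0:ℝ)..1, (1 - 2 * x) * (x * (1 - x)) ^ n * G x
      = -∫ x in (0:ℝ)..1, (x * (1 - x)) ^ (2 * n + 1) := by
  have hGc : Continuous G := continuous_iff_continuousAt.mpr fun x => (hG x).continuousAt
  have hparts := integral_deriv_mul_eq_sub (a := 0) (b := 1) (v := G)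
    (fun x _ => hasDerivAt_mul_one_sub_pow_succ n x) (fun x _ => hG x)
    (Continuous.intervalIntegrable (by fun_prop) _ _)
    (Continuous.intervalIntegrable (by fun_prop) _ _)
  rw [integral_add (Continuous.intervalIntegrable (by fun_prop) _ _)
    (Continuous.intervalIntegrable (by fun_prop) _ _)] at hparts
  have hfirst : ∫ x in (0:ℝ)..1, (n + 1) * (x * (1 - x)) ^ n * (1 - 2 * x) * G x
      = (n + 1) * ∫ x in (0:ℝ)..1, (1 - 2 * x) * (x * (1 - x)) ^ n * G x := by
    rw [← integral_const_mul]; congr 1; ext x; ring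
  simp only [hfirst, ← pow_add, sub_self, mul_zero, zero_mul, ne_eq, Nat.add_one_ne_zero,
    not_false_eq_true, zero_pow, sub_zero] at hparts
  rw [show 2 * n + 1 = n + 1 + n by ring]
  linarith

theorem integral_incBeta_sq (n : ℕ) :
    ∫ x in (0:ℝ)..1, incBeta n x ^ 2
      = incBeta n 1 ^ 2 / 2 - ((2 * n + 1)! ^ 2 / ((n + 1) * (4 * n + 3)!) : ℝ) := by
  have hweight :=
    integral_one_sub_two_mul_mul_pow_mul_of_hasDerivAt n (incBeta.hasDerivAt n)
  rw [integral_mul_one_sub_pow, show 2 * (2 * n + 1) + 1 = 4 * n + 3 by ring] at hweight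
  rw [integral_sq_eq_of_hasDerivAt (incBeta.hasDerivAt n) (by fun_prop) (incBeta.apply_zero n)]
  field_simp at hweight ⊢
  linear_combination 2 * hweight

theorem regIncBeta_natCast_add_one (n : ℕ) :
    regIncBeta (n + 1 : ℕ) (n + 1 : ℕ) = fun x => incBeta n x / incBeta n 1 := by
  ext x
  simp only [regIncBeta, realBeta, incBeta, Nat.cast_add_one, add_sub_cancel_right,
    Real.rpow_natCast, mul_pow]

/-- Closed forms: `∫₀¹ I(m,m;x)² dx = 1/2 − (2m)!⁴/(4(4m)! m!⁴)` and
`∫₀¹ (d/dx I(m,m;x))² dx = (2m−2)!²(2m−1)!²/((4m−3)!(m−1)!⁴)`. -/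
theorem stmt14 (m : ℕ) (hm : 1 ≤ m) :
    (∫ x in (0:ℝ)..1, (regIncBeta m m x)^2
      = 1/2 - ((2*m).factorial : ℝ)^4 / (4 * ((4*m).factorial : ℝ) * ((m.factorial : ℝ))^4)) ∧
    (∫ x in (0:ℝ)..1, (deriv (regIncBeta m m) x)^2
      = (((2*m - 2).factorial : ℝ))^2 * (((2*m - 1).factorial : ℝ))^2 /
        (((4*m - 3).factorial : ℝ) * (((m - 1).factorial : ℝ))^4)) := by
  obtain ⟨n, rfl⟩ : ∃ n, m = n + 1 := ⟨m - 1, by omega⟩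
  have hderiv : deriv (fun x => incBeta n x / incBeta n 1)
      = fun x => (x * (1 - x)) ^ n / incBeta n 1 :=
    funext fun x => ((incBeta.hasDerivAt n x).div_const _).deriv
  rw [regIncBeta_natCast_add_one, hderiv]
  simp only [div_pow, integral_div, ← pow_mul',
    integral_incBeta_sq, integral_mul_one_sub_pow, incBeta.apply_one]
  rw [show 2 * (n + 1) - 2 = 2 * n by omega, show 2 * (n + 1) - 1 = 2 * n + 1 by omega,
    show 4 * (n + 1) - 3 = 4 * n + 1 by omega, show n + 1 - 1 = n by omega,
    show 2 * (n + 1) = 2 * n + 1 + 1 by ring, show 4 * (n + 1) = 4 * n + 3 + 1 by ring,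
    show 2 * (2 * n) + 1 = 4 * n + 1 by ring]
  simp only [Nat.factorial_succ]
  push_cast
  constructor
  · field_simp
    ring
  · field_simp
end
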